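/- For K ~ Binomial(n, z) with z ∈ (0,1), E[1/K · 𝟙[K≥1]] = ∑_{k=1}^{n} C(n,k) z^k (1-z)^{n-k} / k equals n z (1-z)^{n-1} F([1,1,1-n],[2,2], -z/(1-z)), where F is the terminating ₃F₂ series. -/

import Mathlib

open Finset

/-- Pochhammer symbol `(a)ₖ = a(a+1)⋯(a+k-1)`. -/
def poch (a : ℝ) (k : ℕ) : ℝ := ∏ j ∈ Finset.range k, (a + j)

/-- Terminating generalized hypergeometric series
`₃F₂([1,1,a₃],[2,2]; x) = ∑_{k<terms} (1)ₖ(1)ₖ(a₃)ₖ/((2)ₖ(2)ₖ k!) xᵏ`. -/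
noncomputable def F32 (a3 : ℝ) (terms : ℕ) (x : ℝ) : ℝ :=
  ∑ k ∈ Finset.range terms,
    (poch 1 k * poch 1 k * poch a3 k) / (poch 2 k * poch 2 k * (k.factorial : ℝ)) * x ^ k

lemma poch_one (k : ℕ) : poch 1 k = (k.factorial : ℝ) := by
  induction k with
  | zero => simp [poch]
  | succ k ih =>
    rw [poch, Finset.prod_range_succ, ← poch, ih, Nat.factorial_succ]
    push_cast; ring

lemma poch_two (k : ℕ) : poch 2 k = ((k+1).factorial : ℝ) := by
  induction k with
  | zero => simp [poch]
  | succ k ih =>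
    rw [poch, Finset.prod_range_succ, ← poch, ih,
      show (k+1+1).factorial = (k+2) * (k+1).factorial from Nat.factorial_succ (k+1)]
    push_cast; ring

lemma poch_neg (m k : ℕ) (h : k ≤ m) :
    poch (-(m:ℝ)) k = (-1)^k * (m.descFactorial k : ℝ) := by
  induction k with
  | zero => simp [poch]
  | succ k ih =>
    have hk : k ≤ m := Nat.le_of_succ_le h
    rw [poch, Finset.prod_range_succ, ← poch, ih hk]
    have hd : m.descFactorial (k+1) = m.descFactorial k * (m - k) := by
      rw [Nat.descFactorial_eq_prod_range, Nat.descFactorial_eq_prod_range,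
        Finset.prod_range_succ]
    rw [hd]
    have : ((m - k : ℕ) : ℝ) = (m : ℝ) - k := by
      rw [Nat.cast_sub hk]
    push_cast [this]
    ring

/-- For `K ~ Binomial(n, z)` with `z ∈ (0,1)` and `n ≥ 1`,
`E[1/K · 𝟙[K≥1]] = ∑_{k=1}^{n} C(n,k) zᵏ (1-z)^{n-k} / k
  = n z (1-z)^{n-1} ₃F₂([1,1,1-n],[2,2]; -z/(1-z))`
(the series terminating after `n` terms, `k = 0,…,n-1`). -/
theorem binomial_reciprocal_expectation
    (n : ℕ) (hn : 1 ≤ n) (z : ℝ) (hz : z ∈ Set.Ioo (0:ℝ) 1) :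
    (∑ k ∈ Finset.range (n + 1),
        (n.choose k : ℝ) * z ^ k * (1 - z) ^ (n - k)
          * (if 1 ≤ k then 1 / (k : ℝ) else 0))
      = (n : ℝ) * z * (1 - z) ^ (n - 1) * F32 (1 - (n : ℝ)) n (-z / (1 - z)) := by
  obtain ⟨m, rfl⟩ : ∃ m, n = m + 1 := ⟨n - 1, (Nat.succ_pred_eq_of_pos hn).symm⟩
  obtain ⟨hz0, hz1⟩ := hz
  have hne : (1 : ℝ) - z ≠ 0 := by linarith
  simp only [F32, Finset.mul_sum]
  rw [Finset.sum_range_succ']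
  norm_num
  refine Finset.sum_congr rfl fun k hk => ?_
  have hkm : k ≤ m := Nat.lt_succ_iff.mp (Finset.mem_range.mp hk)
  rw [poch_one, poch_two, poch_neg m k hkm,
    Nat.descFactorial_eq_factorial_mul_choose]
  have hkm1 : (m + 1) - (k + 1) = m - k := by omega
  rw [hkm1]
  have hpow : (1 - z) ^ m = (1 - z) ^ (m - k) * (1 - z) ^ k := by
    rw [← pow_add, Nat.sub_add_cancel hkm]
  have hchoose : ((m : ℕ) + 1 : ℝ) * (m.choose k : ℝ)
      = ((m + 1).choose (k + 1) : ℝ) * ((k : ℝ) + 1) := by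
    exact_mod_cast congrArg (Nat.cast : ℕ → ℝ) (Nat.add_one_mul_choose_eq m k)
  push_cast at hchoose
  have hxpow : (-z / (1 - z)) ^ k = (-1 : ℝ)^k * z ^ k / (1 - z) ^ k := by
    rw [div_pow, neg_pow]
  have hsq : (-1 : ℝ)^k * (-1 : ℝ)^k = 1 := by
    rw [← mul_pow]; norm_num
  have hfk : (k.factorial : ℝ) ≠ 0 := Nat.cast_ne_zero.mpr k.factorial_ne_zero
  have hfk1 : ((k+1).factorial : ℝ) ≠ 0 := Nat.cast_ne_zero.mpr (k+1).factorial_ne_zero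
  have hfac1 : ((k+1).factorial : ℝ) = ((k:ℝ)+1) * (k.factorial : ℝ) := by
    rw [Nat.factorial_succ]; push_cast; ring
  have hk1 : ((k : ℝ) + 1) ≠ 0 := by positivity
  rw [hpow, hxpow, hfac1]
  push_cast
  field_simp
  linear_combination
    (-(((m:ℝ) + 1) * (m.choose k : ℝ) * z ^ (k + 1))) * hsq
    + (-(z ^ (k + 1))) * hchoose
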